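/- For any positive integer-valued random variable L with finite mean μ = E[L] > 1, the Shannon entropy of L satisfies H(L) ≤ μ·log μ − (μ−1)·log(μ−1), where log is base 2. -/

import Mathlib

/-!
Gibbs' inequality: for any distribution `q` on the positive integers, `H(L) ≤ -∑ p log q`.
Take for `q` the geometric law `q l = (μ-1)⁻¹ (1-μ⁻¹)^l` of mean `μ`: since `log q l` is affine
in `l`, the cross entropy `-∑ p log q` only depends on the mean of `p`, and equals
`μ log μ - (μ-1) log(μ-1)`.
-/

open Real

section Gibbs

lemma mul_logb_sub_mul_logb_le {b x y : ℝ} (hb : 1 < b) (hx : 0 ≤ x) (hy : 0 ≤ y)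
    (hxy : 0 < x → 0 < y) : x * logb b y - x * logb b x ≤ (y - x) / log b := by
  rcases hx.eq_or_lt with rfl | hx
  · simpa using div_nonneg hy (log_pos hb).le
  have hlog : log y - log x ≤ y / x - 1 := by
    rw [← log_div (hxy hx).ne' hx.ne']
    exact log_le_sub_one_of_pos (div_pos (hxy hx) hx)
  calc x * logb b y - x * logb b x = x * (log y - log x) / log b := by
        simp only [logb]; ring
    _ ≤ x * (y / x - 1) / log b := by gcongr; exact (log_pos hb).le
    _ = (y - x) / log b := by field_simp

variable {ι : Type*} {p q : ι → ℝ}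

theorem tsum_mul_logb_le_tsum_mul_logb {b : ℝ} (hb : 1 < b) (hp : ∀ i, 0 ≤ p i)
    (hq : ∀ i, 0 ≤ q i) (hpq : ∀ i, 0 < p i → 0 < q i) (hps : Summable p) (hqs : Summable q)
    (hmass : ∑' i, q i ≤ ∑' i, p i) (hent : Summable fun i => p i * logb b (p i))
    (hcross : Summable fun i => p i * logb b (q i)) :
    ∑' i, p i * logb b (q i) ≤ ∑' i, p i * logb b (p i) := by
  have hsum : ∑' i, (p i * logb b (q i) - p i * logb b (p i)) ≤ ∑' i, (q i - p i) / log b :=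
    (hcross.sub hent).tsum_le_tsum
      (fun i => mul_logb_sub_mul_logb_le hb (hp i) (hq i) (hpq i)) ((hqs.sub hps).div_const _)
  rw [hcross.tsum_sub hent, tsum_div_const, hqs.tsum_sub hps] at hsum
  have : (∑' i, q i - ∑' i, p i) / log b ≤ 0 :=
    div_nonpos_of_nonpos_of_nonneg (by linarith) (log_pos hb).le
  linarith

end Gibbs

section PosGeometric

noncomputable def posGeometric (μ : ℝ) (l : ℕ) : ℝ :=
  if l = 0 then 0 else (μ - 1)⁻¹ * (1 - μ⁻¹) ^ l

variable {μ : ℝ}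

lemma posGeometric_pos (hμ : 1 < μ) {l : ℕ} (hl : l ≠ 0) : 0 < posGeometric μ l := by
  simp only [posGeometric, hl, if_false]
  exact mul_pos (inv_pos.2 (by linarith)) (pow_pos (sub_pos.2 (inv_lt_one_of_one_lt₀ hμ)) l)

lemma posGeometric_nonneg (hμ : 1 < μ) (l : ℕ) : 0 ≤ posGeometric μ l := by
  rcases eq_or_ne l 0 with rfl | hl
  · simp [posGeometric]
  · exact (posGeometric_pos hμ hl).le

lemma hasSum_posGeometric (hμ : 1 < μ) : HasSum (posGeometric μ) 1 := by
  have hr : 1 - μ⁻¹ < 1 := sub_lt_self 1 (inv_pos.2 (by linarith))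
  have hr0 : 0 ≤ 1 - μ⁻¹ := sub_nonneg.2 (inv_lt_one_of_one_lt₀ hμ).le
  have hval : (μ - 1)⁻¹ * (1 - μ⁻¹) * (1 - (1 - μ⁻¹))⁻¹ = 1 := by
    have : μ - 1 ≠ 0 := by linarith
    field_simp
    ring
  rw [← hasSum_nat_add_iff' 1, Finset.sum_range_one, posGeometric, if_pos rfl, sub_zero]
  refine hval ▸ ((hasSum_geometric_of_lt_one hr0 hr).mul_left _).congr_fun fun l => ?_
  simp only [posGeometric, Nat.add_one_ne_zero, if_false, pow_succ]
  ring

lemma logb_posGeometric (b : ℝ) (hμ : 1 < μ) {l : ℕ} (hl : l ≠ 0) :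
    logb b (posGeometric μ l) = l * (logb b (μ - 1) - logb b μ) - logb b (μ - 1) := by
  simp only [posGeometric, hl, if_false]
  have hμ0 : μ ≠ 0 := by linarith
  have hμ1 : μ - 1 ≠ 0 := by linarith
  rw [inv_eq_one_div μ, one_sub_div hμ0, logb_mul (inv_ne_zero hμ1)
    (pow_ne_zero _ (div_ne_zero hμ1 hμ0)), logb_pow, logb_inv, logb_div hμ1 hμ0]
  ring

lemma hasSum_mul_logb_posGeometric (b : ℝ) (hμ : 1 < μ) {p : ℕ → ℝ} {s m : ℝ} (hp0 : p 0 = 0)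
    (hs : HasSum p s) (hm : HasSum (fun l : ℕ => (l : ℝ) * p l) m) :
    HasSum (fun l => p l * logb b (posGeometric μ l))
      (m * (logb b (μ - 1) - logb b μ) - s * logb b (μ - 1)) := by
  refine ((hm.mul_right _).sub (hs.mul_right _)).congr_fun fun l => ?_
  rcases eq_or_ne l 0 with rfl | hl
  · simp [hp0]
  · rw [logb_posGeometric b hμ hl]
    ring

end PosGeometric

theorem stmt_0 (p : ℕ → ℝ) (hp : ∀ l, 0 ≤ p l) (hp0 : p 0 = 0)
    (hpsum : Summable p) (hsum1 : ∑' l, p l = 1)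
    (hmean : Summable (fun l : ℕ => (l : ℝ) * p l))
    (hent : Summable (fun l => p l * Real.logb 2 (p l)))
    (hμ : 1 < ∑' l : ℕ, (l : ℝ) * p l) :
    -∑' l, p l * Real.logb 2 (p l) ≤
      (∑' l : ℕ, (l : ℝ) * p l) * Real.logb 2 (∑' l : ℕ, (l : ℝ) * p l)
        - ((∑' l : ℕ, (l : ℝ) * p l) - 1) * Real.logb 2 ((∑' l : ℕ, (l : ℝ) * p l) - 1) := by
  set μ := ∑' l : ℕ, (l : ℝ) * p l
  have hq := hasSum_posGeometric hμ
  have hcross := hasSum_mul_logb_posGeometric 2 hμ hp0 (hsum1 ▸ hpsum.hasSum) hmean.hasSum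
  have hsupp : ∀ l, 0 < p l → 0 < posGeometric μ l := fun l hl =>
    posGeometric_pos hμ (by rintro rfl; exact hl.ne' hp0)
  have hgibbs := tsum_mul_logb_le_tsum_mul_logb one_lt_two hp (posGeometric_nonneg hμ) hsupp
    hpsum hq.summable (by rw [hq.tsum_eq, hsum1]) hent hcross.summable
  rw [hcross.tsum_eq] at hgibbs
  linarith
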